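/- For all n ≥ 0 and real x ≠ -1, F_{n+1,λ}(x) = (x/(1+x)) ∑_{k=0}^{n} C(n,k) [ (1-λ)_{n-k,λ} F_{k,λ}(x) + (1)_{n-k,λ} F_{k+1,λ}(x) ]. -/

import Mathlib

open Finset

/-- Generalized falling factorial `(x)_{n,lam} = x(x-lam)...(x-(n-1)lam)`. -/
noncomputable def dfall (lam x : ℝ) (n : ℕ) : ℝ := ∏ i ∈ Finset.range n, (x - i * lam)

/-- Generalized rising factorial `⟨x⟩_{n,lam} = x(x+lam)...(x+(n-1)lam)`. -/
noncomputable def drise (lam x : ℝ) (n : ℕ) : ℝ := ∏ i ∈ Finset.range n, (x + i * lam)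

lemma dfall_zero (lam x : ℝ) : dfall lam x 0 = 1 := by simp [dfall]

lemma dfall_succ (lam x : ℝ) (n : ℕ) : dfall lam x (n+1) = dfall lam x n * (x - n * lam) := by
  simp [dfall, Finset.prod_range_succ]

lemma dfall_succ' (lam x : ℝ) (n : ℕ) : dfall lam x (n+1) = x * dfall lam (x - lam) n := by
  rw [dfall, Finset.prod_range_succ']
  rw [mul_comm]
  congr 1
  · simp
  · apply Finset.prod_congr rfl
    intro i _
    simp [dfall]
    ring

lemma dfall_zero_arg (lam : ℝ) (n : ℕ) : dfall lam 0 (n+1) = 0 := by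
  rw [dfall_succ']; ring

lemma dfall_one_nat_self (k : ℕ) : dfall 1 (k : ℝ) k = (k.factorial : ℝ) := by
  induction k with
  | zero => simp [dfall_zero]
  | succ k ih =>
    rw [dfall_succ']
    push_cast
    rw [show ((k:ℝ) + 1 - 1) = (k:ℝ) by ring, ih]
    rw [Nat.factorial_succ]; push_cast; ring

lemma dfall_one_nat_lt (k m : ℕ) (h : k < m) : dfall 1 (k : ℝ) m = 0 := by
  apply Finset.prod_eq_zero (Finset.mem_range.mpr h)
  simp

lemma dfall_uniq (N : ℕ) (c : ℕ → ℝ)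
    (h : ∀ x : ℝ, ∑ k ∈ range N, c k * dfall 1 x k = 0) :
    ∀ k, k < N → c k = 0 := by
  intro k
  induction k using Nat.strong_induction_on with
  | _ k ih =>
    intro hk
    have hx := h (k : ℝ)
    rw [Finset.sum_eq_single_of_mem k (mem_range.mpr hk)] at hx
    · rw [dfall_one_nat_self] at hx
      have h0 : (k.factorial : ℝ) ≠ 0 := Nat.cast_ne_zero.mpr (Nat.factorial_ne_zero k)
      exact (mul_eq_zero.mp hx).resolve_right h0
    · intro m hm hne
      rcases lt_or_gt_of_ne hne with hlt | hgt
      · rw [ih m hlt (lt_trans hlt hk)]; ring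
      · rw [dfall_one_nat_lt k m hgt]; ring

lemma dfall_eq_coeff (N : ℕ) (a b : ℕ → ℝ)
    (h : ∀ x : ℝ, ∑ k ∈ range N, a k * dfall 1 x k = ∑ k ∈ range N, b k * dfall 1 x k) :
    ∀ k, k < N → a k = b k := by
  intro k hk
  have := dfall_uniq N (fun k => a k - b k) (fun x => by
    simp only [sub_mul, Finset.sum_sub_distrib, h x, sub_self]) k hk
  have this : a k - b k = 0 := this
  linarith

lemma dfall_add (lam x y : ℝ) (n : ℕ) :
    dfall lam (x+y) n = ∑ k ∈ range (n+1), (n.choose k : ℝ) * dfall lam x k * dfall lam y (n-k) := by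
  induction n with
  | zero => simp [dfall_zero]
  | succ n ih =>
    have key : ∀ k ∈ range (n+1),
        (n.choose k : ℝ) * dfall lam x k * dfall lam y (n-k) * ((x+y) - n*lam)
        = (n.choose k:ℝ) * dfall lam x (k+1) * dfall lam y (n-k)
          + (n.choose k:ℝ) * dfall lam x k * dfall lam y (n-k+1) := by
      intro k hk
      rw [mem_range, Nat.lt_succ_iff] at hk
      rw [dfall_succ, dfall_succ]
      have h1 : ((n-k:ℕ):ℝ) = (n:ℝ) - k := by
        rw [Nat.cast_sub hk]
      rw [h1]; ring
    rw [dfall_succ, ih, Finset.sum_mul, Finset.sum_congr rfl key, Finset.sum_add_distrib]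
    have h2 : ∑ k ∈ range (n+1), (n.choose k:ℝ) * dfall lam x k * dfall lam y (n-k+1)
        = (∑ k ∈ range (n+1), (n.choose (k+1):ℝ) * dfall lam x (k+1) * dfall lam y (n-k))
          + dfall lam y (n+1) := by
      have := Finset.sum_range_succ'
        (fun k => (n.choose k:ℝ) * dfall lam x k * dfall lam y (n+1-k)) (n+1)
      simp only [Nat.succ_sub_succ] at this
      rw [Finset.sum_range_succ (fun k => (n.choose k:ℝ) * dfall lam x k * dfall lam y (n+1-k)) (n+1)] at this
      simp only [Nat.choose_succ_self, Nat.cast_zero, zero_mul, add_zero, Nat.choose_zero_right,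
        Nat.cast_one, one_mul, dfall_zero, Nat.sub_zero, mul_one] at this
      have h3 : ∀ k ∈ range (n+1), (n.choose k:ℝ) * dfall lam x k * dfall lam y (n+1-k)
          = (n.choose k:ℝ) * dfall lam x k * dfall lam y (n-k+1) := by
        intro k hk
        rw [mem_range, Nat.lt_succ_iff] at hk
        rw [Nat.sub_add_comm hk]
      rw [Finset.sum_congr rfl h3] at this
      rw [this]
    rw [h2]
    have h4 := Finset.sum_range_succ'
      (fun k => ((n+1).choose k:ℝ) * dfall lam x k * dfall lam y (n+1-k)) (n+1)
    simp only [Nat.succ_sub_succ] at h4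
    rw [h4]
    simp only [Nat.choose_succ_succ, Nat.cast_add, Nat.choose_zero_right, Nat.cast_one, one_mul,
      dfall_zero, Nat.sub_zero, mul_one]
    rw [Finset.sum_congr rfl (fun k _ => by ring :
      ∀ k ∈ range (n+1), ((n.choose k:ℝ) + (n.choose (k+1):ℝ)) * dfall lam x (k+1) * dfall lam y (n-k)
        = (n.choose k:ℝ) * dfall lam x (k+1) * dfall lam y (n-k)
          + (n.choose (k+1):ℝ) * dfall lam x (k+1) * dfall lam y (n-k)),
      Finset.sum_add_distrib]
    ring

lemma dfall_one_shift (x : ℝ) (j : ℕ) :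
    dfall 1 (x+1) j = dfall 1 x j + j * dfall 1 x (j-1) := by
  cases j with
  | zero => simp [dfall_zero]
  | succ j =>
    rw [dfall_succ', show (x+1-1:ℝ) = x by ring, Nat.succ_sub_one, dfall_succ]
    push_cast; ring

/-- Key convolution identity: `x ∑ C(N,k) (1)_{N-k,λ} F_k(x) = (1+x) F_N(x)` for `N ≥ 1`. -/
lemma identity1 (lam : ℝ) (S : ℕ → ℕ → ℝ)
    (hS : ∀ (n : ℕ) (x : ℝ), dfall lam x n = ∑ k ∈ Finset.range (n + 1), S n k * dfall 1 x k)
    (F : ℕ → ℝ → ℝ)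
    (hF : ∀ (n : ℕ) (x : ℝ), F n x = ∑ k ∈ Finset.range (n + 1), S n k * (k.factorial : ℝ) * x ^ k)
    (N : ℕ) (hN : 1 ≤ N) (x : ℝ) :
    x * ∑ k ∈ range (N+1), (N.choose k : ℝ) * dfall lam 1 (N-k) * F k x = (1+x) * F N x := by
  set Sg : ℕ → ℕ → ℝ := fun k j => if j ≤ k then S k j else 0 with hSg_def
  set G : ℕ → ℝ := fun j => S N j + (if j < N then ((j:ℝ)+1) * S N (j+1) else 0) with hG_def
  set c : ℕ → ℝ := fun j => ∑ k ∈ range (N+1), (N.choose k : ℝ) * dfall lam 1 (N-k) * Sg k j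
    with hc_def
  -- extended expansion of dfall
  have hSg : ∀ k, k ≤ N → ∀ y : ℝ, dfall lam y k = ∑ j ∈ range (N+1), Sg k j * dfall 1 y j := by
    intro k hk y
    rw [hS k y]
    have e1 : ∑ j ∈ range (k+1), S k j * dfall 1 y j
        = ∑ j ∈ range (k+1), Sg k j * dfall 1 y j := by
      refine Finset.sum_congr rfl fun j hj => ?_
      rw [mem_range, Nat.lt_succ_iff] at hj
      simp only [hSg_def, if_pos hj]
    rw [e1]
    apply Finset.sum_subset (Finset.range_subset_range.mpr (by omega))
    intro j hj hjn
    rw [mem_range, Nat.lt_succ_iff, not_le] at hjn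
    simp only [hSg_def, if_neg (by omega : ¬ j ≤ k), zero_mul]
  -- extended expansion of F
  have hFg : ∀ k, k ≤ N → F k x = ∑ j ∈ range (N+1), Sg k j * (j.factorial : ℝ) * x ^ j := by
    intro k hk
    rw [hF k x]
    have e1 : ∑ j ∈ range (k+1), S k j * (j.factorial:ℝ) * x ^ j
        = ∑ j ∈ range (k+1), Sg k j * (j.factorial:ℝ) * x ^ j := by
      refine Finset.sum_congr rfl fun j hj => ?_
      rw [mem_range, Nat.lt_succ_iff] at hj
      simp only [hSg_def, if_pos hj]
    rw [e1]
    apply Finset.sum_subset (Finset.range_subset_range.mpr (by omega))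
    intro j hj hjn
    rw [mem_range, Nat.lt_succ_iff, not_le] at hjn
    simp only [hSg_def, if_neg (by omega : ¬ j ≤ k), zero_mul]
  -- Step A: the c-expansion of (y+1)_{N,λ}
  have stepA : ∀ y : ℝ, dfall lam (y+1) N = ∑ j ∈ range (N+1), c j * dfall 1 y j := by
    intro y
    rw [dfall_add lam y 1 N]
    have e1 : ∑ k ∈ range (N+1), (N.choose k:ℝ) * dfall lam y k * dfall lam 1 (N-k)
        = ∑ k ∈ range (N+1), ∑ j ∈ range (N+1),
            (N.choose k:ℝ) * dfall lam 1 (N-k) * Sg k j * dfall 1 y j := by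
      refine Finset.sum_congr rfl fun k hk => ?_
      rw [mem_range, Nat.lt_succ_iff] at hk
      rw [hSg k hk y, Finset.mul_sum, Finset.sum_mul]
      exact Finset.sum_congr rfl fun j _ => by ring
    rw [e1, Finset.sum_comm]
    refine Finset.sum_congr rfl fun j _ => ?_
    rw [hc_def, ← Finset.sum_mul]
  -- Step B: the G-expansion of (y+1)_{N,λ}
  have stepB : ∀ y : ℝ, dfall lam (y+1) N = ∑ j ∈ range (N+1), G j * dfall 1 y j := by
    intro y
    rw [hS N (y+1)]
    have e1 : ∑ j ∈ range (N+1), S N j * dfall 1 (y+1) j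
        = (∑ j ∈ range (N+1), S N j * dfall 1 y j)
          + ∑ j ∈ range (N+1), S N j * j * dfall 1 y (j-1) := by
      rw [← Finset.sum_add_distrib]
      refine Finset.sum_congr rfl fun j _ => ?_
      rw [dfall_one_shift]; ring
    rw [e1]
    have e2 : ∑ j ∈ range (N+1), S N j * j * dfall 1 y (j-1)
        = ∑ j ∈ range N, S N (j+1) * ((j:ℝ)+1) * dfall 1 y j := by
      rw [Finset.sum_range_succ' (fun j => S N j * (j:ℝ) * dfall 1 y (j-1)) N]
      simp only [Nat.cast_zero, mul_zero, zero_mul, add_zero, Nat.add_sub_cancel]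
      refine Finset.sum_congr rfl fun j _ => ?_
      push_cast; ring
    rw [e2]
    have e3 : ∑ j ∈ range (N+1), G j * dfall 1 y j
        = (∑ j ∈ range (N+1), S N j * dfall 1 y j)
          + ∑ j ∈ range (N+1), (if j < N then ((j:ℝ)+1) * S N (j+1) else 0) * dfall 1 y j := by
      rw [← Finset.sum_add_distrib]
      refine Finset.sum_congr rfl fun j _ => ?_
      rw [hG_def]; ring
    rw [e3]
    congr 1
    rw [← Finset.sum_subset (Finset.range_subset_range.mpr (by omega : N ≤ N+1))
      (fun j _ hj => by rw [mem_range, not_lt] at hj; rw [if_neg (by omega), zero_mul])]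
    refine Finset.sum_congr rfl fun j hj => ?_
    rw [mem_range] at hj
    rw [if_pos hj]; ring
  -- Step C: c = G on range (N+1)
  have stepC : ∀ j, j < N + 1 → c j = G j := by
    apply dfall_eq_coeff
    intro y
    rw [← stepA y, stepB y]
  -- Step D: S N 0 = 0
  have stepD : S N 0 = 0 := by
    obtain ⟨M, rfl⟩ : ∃ M, N = M + 1 := ⟨N - 1, by omega⟩
    have := hS (M+1) 0
    rw [dfall_zero_arg, Finset.sum_range_succ' (fun k => S (M+1) k * dfall 1 0 k) (M+1)] at this
    simp only [dfall_zero_arg, mul_zero, Finset.sum_const_zero, zero_add, dfall_zero, mul_one] at this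
    exact this.symm
  -- Step E: put it together
  have e1 : ∑ k ∈ range (N+1), (N.choose k : ℝ) * dfall lam 1 (N-k) * F k x
      = ∑ j ∈ range (N+1), c j * ((j.factorial:ℝ) * x ^ j) := by
    have e0 : ∑ k ∈ range (N+1), (N.choose k:ℝ) * dfall lam 1 (N-k) * F k x
        = ∑ k ∈ range (N+1), ∑ j ∈ range (N+1),
            (N.choose k:ℝ) * dfall lam 1 (N-k) * Sg k j * ((j.factorial:ℝ) * x ^ j) := by
      refine Finset.sum_congr rfl fun k hk => ?_
      rw [mem_range, Nat.lt_succ_iff] at hk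
      rw [hFg k hk, Finset.mul_sum]
      exact Finset.sum_congr rfl fun j _ => by ring
    rw [e0, Finset.sum_comm]
    refine Finset.sum_congr rfl fun j _ => ?_
    rw [hc_def, ← Finset.sum_mul]
  rw [e1]
  have e2 : ∑ j ∈ range (N+1), c j * ((j.factorial:ℝ) * x ^ j)
      = ∑ j ∈ range (N+1), G j * ((j.factorial:ℝ) * x ^ j) :=
    Finset.sum_congr rfl fun j hj => by rw [stepC j (mem_range.mp hj)]
  rw [e2]
  have e3 : ∑ j ∈ range (N+1), G j * ((j.factorial:ℝ) * x ^ j)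
      = (∑ j ∈ range (N+1), S N j * (j.factorial:ℝ) * x ^ j)
        + ∑ j ∈ range N, ((j:ℝ)+1) * S N (j+1) * ((j.factorial:ℝ) * x ^ j) := by
    have e3a : ∑ j ∈ range (N+1), G j * ((j.factorial:ℝ) * x ^ j)
        = (∑ j ∈ range (N+1), S N j * (j.factorial:ℝ) * x ^ j)
          + ∑ j ∈ range (N+1), (if j < N then ((j:ℝ)+1) * S N (j+1) else 0)
              * ((j.factorial:ℝ) * x ^ j) := by
      rw [← Finset.sum_add_distrib]
      refine Finset.sum_congr rfl fun j _ => ?_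
      rw [hG_def]; ring
    rw [e3a]
    congr 1
    rw [← Finset.sum_subset (Finset.range_subset_range.mpr (by omega : N ≤ N+1))
      (fun j _ hj => by rw [mem_range, not_lt] at hj; rw [if_neg (by omega), zero_mul])]
    refine Finset.sum_congr rfl fun j hj => ?_
    rw [mem_range] at hj
    rw [if_pos hj]
  rw [e3, mul_add, ← hF N x]
  have e4 : x * ∑ j ∈ range N, ((j:ℝ)+1) * S N (j+1) * ((j.factorial:ℝ) * x ^ j) = F N x := by
    rw [hF N x, Finset.sum_range_succ' (fun j => S N j * (j.factorial:ℝ) * x ^ j) N, stepD]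
    simp only [Nat.cast_zero, zero_mul, Nat.factorial_zero, Nat.cast_one, mul_one, pow_zero, add_zero]
    rw [Finset.mul_sum]
    refine Finset.sum_congr rfl fun j _ => ?_
    rw [Nat.factorial_succ]
    push_cast; ring
  rw [e4]; ring

theorem stmt18 (lam : ℝ) (S : ℕ → ℕ → ℝ)
    (hS : ∀ (n : ℕ) (x : ℝ), dfall lam x n = ∑ k ∈ Finset.range (n + 1), S n k * dfall 1 x k)
    (F : ℕ → ℝ → ℝ)
    (hF : ∀ (n : ℕ) (x : ℝ), F n x = ∑ k ∈ Finset.range (n + 1), S n k * (k.factorial : ℝ) * x ^ k) (n : ℕ) (x : ℝ) (hx : x ≠ -1) :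
    F (n + 1) x = x / (1 + x) * ∑ k ∈ Finset.range (n + 1),
      (n.choose k : ℝ) *
        (dfall lam (1 - lam) (n - k) * F k x + dfall lam 1 (n - k) * F (k + 1) x) := by
  have h1x : (1 + x) ≠ 0 := fun h => hx (by linarith)
  have hid := identity1 lam S hS F hF (n+1) (by omega) x
  -- rewrite the goal sum as the identity1 sum
  have hGS : ∑ k ∈ Finset.range (n + 1), (n.choose k : ℝ) *
        (dfall lam (1 - lam) (n - k) * F k x + dfall lam 1 (n - k) * F (k + 1) x)
      = ∑ k ∈ range (n+2), ((n+1).choose k : ℝ) * dfall lam 1 (n+1-k) * F k x := by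
    -- split LHS
    have lhs_split : ∑ k ∈ Finset.range (n + 1), (n.choose k : ℝ) *
          (dfall lam (1 - lam) (n - k) * F k x + dfall lam 1 (n - k) * F (k + 1) x)
        = (∑ k ∈ range (n+1), (n.choose k : ℝ) * dfall lam 1 (n-k+1) * F k x)
          + ∑ k ∈ range (n+1), (n.choose k : ℝ) * dfall lam 1 (n-k) * F (k+1) x := by
      rw [← Finset.sum_add_distrib]
      refine Finset.sum_congr rfl fun k _ => ?_
      have hA : dfall lam (1-lam) (n-k) = dfall lam 1 (n-k+1) := by
        rw [dfall_succ', one_mul]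
      rw [hA]; ring
    rw [lhs_split]
    -- split RHS
    have rhs_split : ∑ k ∈ range (n+2), ((n+1).choose k : ℝ) * dfall lam 1 (n+1-k) * F k x
        = (∑ k ∈ range (n+1), ((n.choose k : ℝ) + (n.choose (k+1) : ℝ))
              * dfall lam 1 (n-k) * F (k+1) x)
          + dfall lam 1 (n+1) * F 0 x := by
      rw [Finset.sum_range_succ' (fun k => ((n+1).choose k : ℝ) * dfall lam 1 (n+1-k) * F k x) (n+1)]
      simp only [Nat.succ_sub_succ, Nat.choose_succ_succ, Nat.cast_add, Nat.choose_zero_right,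
        Nat.cast_one, one_mul, Nat.sub_zero]
    rw [rhs_split]
    have rhs2 : ∑ k ∈ range (n+1), ((n.choose k : ℝ) + (n.choose (k+1) : ℝ))
            * dfall lam 1 (n-k) * F (k+1) x
        = (∑ k ∈ range (n+1), (n.choose k : ℝ) * dfall lam 1 (n-k) * F (k+1) x)
          + ∑ k ∈ range (n+1), (n.choose (k+1) : ℝ) * dfall lam 1 (n-k) * F (k+1) x := by
      rw [← Finset.sum_add_distrib]
      exact Finset.sum_congr rfl fun k _ => by ring
    rw [rhs2]
    have rhs3 : (∑ k ∈ range (n+1), (n.choose (k+1) : ℝ) * dfall lam 1 (n-k) * F (k+1) x)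
          + dfall lam 1 (n+1) * F 0 x
        = ∑ k ∈ range (n+1), (n.choose k : ℝ) * dfall lam 1 (n-k+1) * F k x := by
      have hs := Finset.sum_range_succ' (fun k => (n.choose k : ℝ) * dfall lam 1 (n+1-k) * F k x) (n+1)
      simp only [Nat.succ_sub_succ, Nat.choose_zero_right, Nat.cast_one, one_mul, Nat.sub_zero] at hs
      rw [Finset.sum_range_succ (fun k => (n.choose k : ℝ) * dfall lam 1 (n+1-k) * F k x) (n+1)] at hs
      simp only [Nat.choose_succ_self, Nat.cast_zero, zero_mul, add_zero] at hs
      rw [← hs]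
      refine Finset.sum_congr rfl fun k hk => ?_
      rw [mem_range, Nat.lt_succ_iff] at hk
      rw [Nat.sub_add_comm hk]
    rw [add_assoc, rhs3]
    ring
  rw [hGS, eq_comm, div_mul_eq_mul_div, div_eq_iff h1x]
  linarith [hid]
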